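/- Fix ε ∈ (1/2, 1), a channel W with V_ε(W) > 0, and a ∈ ℝ with a > 2/(1−ε). Let (f,φ) be an (n,Rₙ) constant composition code with Rₙ = C(W) + √(V_ε(W)/n)·Φ⁻¹(ε) − (1/n)·ln(1 − ε − 2/a) and common composition Q satisfying V(Q,W) < V_ε(W)·[Φ⁻¹(ε)]²/a. Then the average error probability of (f,φ) is strictly greater than ε; in fact, it is at least ε + 1/a. -/

import Mathlib

open Finset

/-- Mutual information `I(P;W)`. -/
noncomputable def mutualInfo {X Y : Type*} [Fintype X] [Fintype Y]
    (P : X → ℝ) (W : X → Y → ℝ) : ℝ :=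
  ∑ x, ∑ y, P x * W x y * Real.log (W x y / ∑ z, P z * W z y)

/-- Channel capacity `C(W)`. -/
noncomputable def capacity {X Y : Type*} [Fintype X] [Fintype Y]
    (W : X → Y → ℝ) : ℝ :=
  sSup {c : ℝ | ∃ P : X → ℝ, (∀ x, 0 ≤ P x) ∧ (∑ x, P x = 1) ∧ c = mutualInfo P W}

/-- The probability simplex on a finite alphabet. -/
def probSimplex (X : Type*) [Fintype X] : Set (X → ℝ) :=
  {P | (∀ x, 0 ≤ P x) ∧ ∑ x, P x = 1}

/-- The conditional information variance `V(Q,W)`. -/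
noncomputable def condInfoVar {X Y : Type*} [Fintype X] [Fintype Y]
    (Q : X → ℝ) (W : X → Y → ℝ) : ℝ :=
  ∑ x, ∑ y, Q x * W x y *
    (Real.log (W x y / ∑ z, Q z * W z y)
      - ∑ b, W x b * Real.log (W x b / ∑ z, Q z * W z b)) ^ 2

/-- The set of capacity-achieving input distributions. -/
noncomputable def capAchievers {X Y : Type*} [Fintype X] [Fintype Y]
    (W : X → Y → ℝ) : Set (X → ℝ) :=
  {P | P ∈ probSimplex X ∧ mutualInfo P W = capacity W}

/-- The `ε`-dispersion `V_ε(W)`. -/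
noncomputable def epsDispersion {X Y : Type*} [Fintype X] [Fintype Y]
    (ε : ℝ) (W : X → Y → ℝ) : ℝ :=
  if ε < 1 / 2 then sInf {v : ℝ | ∃ P ∈ capAchievers W, v = condInfoVar P W}
  else sSup {v : ℝ | ∃ P ∈ capAchievers W, v = condInfoVar P W}

/-- The `ℓ₂` distance between two input distributions. -/
noncomputable def l2dist {X : Type*} [Fintype X] (P Q : X → ℝ) : ℝ :=
  Real.sqrt (∑ x, (P x - Q x) ^ 2)

/-- The set `S₃(δ)` of distributions `ℓ₂`-far from every capacity achiever. -/
noncomputable def farSet {X Y : Type*} [Fintype X] [Fintype Y]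
    (W : X → Y → ℝ) (δ : ℝ) : Set (X → ℝ) :=
  {P | P ∈ probSimplex X ∧
    δ < sInf {d : ℝ | ∃ P' ∈ capAchievers W, d = l2dist P P'}}

/-- Average error probability of a code with codewords `cw` and decoding regions `A`. -/
noncomputable def avgErr {X Y : Type*} [Fintype X] [Fintype Y] [DecidableEq Y]
    (W : X → Y → ℝ) (n M : ℕ)
    (cw : Fin M → Fin n → X) (A : Fin M → Finset (Fin n → Y)) : ℝ :=
  (M : ℝ)⁻¹ * ∑ m, ∑ yn ∈ (A m)ᶜ, ∏ i, W (cw m i) (yn i)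

/-- The decoding regions are disjoint and cover the output space. -/
def isDecoder {Y : Type*} [Fintype Y] [DecidableEq Y]
    (n M : ℕ) (A : Fin M → Finset (Fin n → Y)) : Prop :=
  (∀ m m', m ≠ m' → Disjoint (A m) (A m')) ∧ ∀ yn : Fin n → Y, ∃ m, yn ∈ A m

/-- All codewords have empirical composition (type) `Q`. -/
def hasComposition {X : Type*} [Fintype X] [DecidableEq X]
    (n M : ℕ) (cw : Fin M → Fin n → X) (Q : X → ℝ) : Prop :=
  ∀ (m : Fin M) (a : X),
    ((Finset.univ.filter (fun i => cw m i = a)).card : ℝ) = n * Q a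

/-- Standard normal density. -/
noncomputable def normalPDF (t : ℝ) : ℝ :=
  Real.exp (-t ^ 2 / 2) / Real.sqrt (2 * Real.pi)

/-- Standard normal distribution function. -/
noncomputable def normalCDF (t : ℝ) : ℝ := ∫ s in Set.Iic t, normalPDF s

/-!
For a codeword `x` of type `Q`, the information density `Σᵢ log (W(yᵢ|xᵢ) / QW(yᵢ))` has
mean `n I(Q;W)` and variance `n V(Q,W)` under `W^n(·|x)`, since the letters are independent.
Split the decoding region of `x` at the threshold `γ`: above it Chebyshev bounds the
`W^n(·|x)`-mass by `n V / (γ - n I)²`, below it `W^n(y|x) ≤ e^γ (QW)^n(y)`, and the regions are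
disjoint, so their `(QW)^n`-masses add up to at most one. Averaging over the `M` codewords gives
`P̄_e ≥ 1 - n V / (γ - n I)² - e^γ / M`. For `γ = n C + √(n V_ε) Φ⁻¹(ε)`, using `I ≤ C` and
`Φ⁻¹(ε) > 0`, the two subtracted terms are at most `1/a` and `1 - ε - 2/a`.
-/

section ProductWeights

variable {Y : Type*} [Fintype Y] {n : ℕ} (w : Fin n → Y → ℝ)

theorem sum_prod_mul_prod (f : Fin n → Y → ℝ) :
    ∑ y : Fin n → Y, (∏ i, w i (y i)) * ∏ i, f i (y i) = ∏ i, ∑ t, w i t * f i t := by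
  classical
  simp_rw [← Finset.prod_mul_distrib]
  rw [Finset.prod_univ_sum, Fintype.piFinset_univ]

variable {w}

theorem sum_prod_eq_one (hw : ∀ i, ∑ t, w i t = 1) : ∑ y : Fin n → Y, ∏ i, w i (y i) = 1 := by
  classical
  rw [← Fintype.piFinset_univ, ← Finset.prod_univ_sum]
  simp [hw]

theorem sum_prod_mul_apply (hw : ∀ i, ∑ t, w i t = 1) (i : Fin n) (L : Y → ℝ) :
    ∑ y : Fin n → Y, (∏ j, w j (y j)) * L (y i) = ∑ t, w i t * L t := by
  classical
  have h := sum_prod_mul_prod w fun j t => if j = i then L t else 1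
  rw [Fintype.prod_eq_single i fun j hj => by simp [hj, hw j]] at h
  simpa using h

theorem sum_prod_mul_apply_mul_apply (hw : ∀ i, ∑ t, w i t = 1) {i j : Fin n} (hij : i ≠ j)
    (L L' : Y → ℝ) :
    ∑ y : Fin n → Y, (∏ k, w k (y k)) * (L (y i) * L' (y j))
      = (∑ t, w i t * L t) * ∑ t, w j t * L' t := by
  classical
  have h := sum_prod_mul_prod w fun k t => if k = i then L t else if k = j then L' t else 1
  rw [Fintype.prod_eq_mul i j hij fun k hk => by simp [hk.1, hk.2, hw k]] at h
  simp only [if_neg hij.symm, ite_true] at h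
  rw [← h]
  refine Finset.sum_congr rfl fun y _ => ?_
  rw [Fintype.prod_eq_mul (f := fun k => if k = i then L (y k) else if k = j then L' (y k) else 1)
    i j hij fun k hk => by simp [hk.1, hk.2]]
  simp [hij.symm]

theorem sum_prod_mul_sum_sq (hw : ∀ i, ∑ t, w i t = 1) (G : Fin n → Y → ℝ)
    (hG : ∀ i, ∑ t, w i t * G i t = 0) :
    ∑ y : Fin n → Y, (∏ i, w i (y i)) * (∑ i, G i (y i)) ^ 2
      = ∑ i, ∑ t, w i t * G i t ^ 2 := by
  simp_rw [sq, Finset.sum_mul_sum, Finset.mul_sum]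
  rw [Finset.sum_comm]
  refine Finset.sum_congr rfl fun i _ => ?_
  rw [Finset.sum_comm, Fintype.sum_eq_single i fun j hji => by
    rw [sum_prod_mul_apply_mul_apply hw hji.symm, hG i, zero_mul]]
  exact sum_prod_mul_apply hw i fun t => G i t * G i t

end ProductWeights

section ChangeOfMeasure

variable {Ω : Type*} [Fintype Ω] {μ : Ω → ℝ}

theorem sum_filter_lt_le_div_sq (hμ : ∀ ω, 0 ≤ μ ω) (f : Ω → ℝ) {E γ : ℝ} (hγ : E < γ) :
    ∑ ω with γ < f ω, μ ω ≤ (∑ ω, μ ω * (f ω - E) ^ 2) / (γ - E) ^ 2 := by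
  rw [le_div_iff₀ (by nlinarith), Finset.sum_mul]
  calc ∑ ω with γ < f ω, μ ω * (γ - E) ^ 2
      ≤ ∑ ω with γ < f ω, μ ω * (f ω - E) ^ 2 :=
        Finset.sum_le_sum fun ω hω => mul_le_mul_of_nonneg_left
          (pow_le_pow_left₀ (by linarith) (by linarith [(Finset.mem_filter.mp hω).2]) 2) (hμ ω)
    _ ≤ ∑ ω, μ ω * (f ω - E) ^ 2 :=
        Finset.sum_le_sum_of_subset_of_nonneg (Finset.subset_univ _)
          fun ω _ _ => mul_nonneg (hμ ω) (sq_nonneg _)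

theorem sum_le_div_sq_add_exp_mul (hμ : ∀ ω, 0 ≤ μ ω) {ν : Ω → ℝ} (hν : ∀ ω, 0 ≤ ν ω)
    (f : Ω → ℝ) {E γ : ℝ} (hγ : E < γ) (hμν : ∀ ω, f ω ≤ γ → μ ω ≤ Real.exp γ * ν ω)
    (S : Finset Ω) :
    ∑ ω ∈ S, μ ω ≤ (∑ ω, μ ω * (f ω - E) ^ 2) / (γ - E) ^ 2 + Real.exp γ * ∑ ω ∈ S, ν ω := by
  classical
  rw [← Finset.sum_filter_add_sum_filter_not S (fun ω => γ < f ω), Finset.mul_sum]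
  gcongr ?_ + ?_
  · refine le_trans ?_ (sum_filter_lt_le_div_sq hμ f hγ)
    exact Finset.sum_le_sum_of_subset_of_nonneg
      (Finset.filter_subset_filter _ (Finset.subset_univ S)) fun ω _ _ => hμ ω
  · calc ∑ ω ∈ S with ¬γ < f ω, μ ω ≤ ∑ ω ∈ S with ¬γ < f ω, Real.exp γ * ν ω :=
          Finset.sum_le_sum fun ω hω => hμν ω (not_lt.mp (Finset.mem_filter.mp hω).2)
      _ ≤ ∑ ω ∈ S, Real.exp γ * ν ω :=
          Finset.sum_le_sum_of_subset_of_nonneg (Finset.filter_subset _ _)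
            fun ω _ _ => mul_nonneg (Real.exp_nonneg γ) (hν ω)

theorem sum_sum_le_sum_of_pairwise_disjoint [DecidableEq Ω] {ι : Type*} [Fintype ι]
    {A : ι → Finset Ω} (hA : ∀ i j, i ≠ j → Disjoint (A i) (A j)) {ν : Ω → ℝ}
    (hν : ∀ ω, 0 ≤ ν ω) : ∑ i, ∑ ω ∈ A i, ν ω ≤ ∑ ω, ν ω := by
  rw [← Finset.sum_biUnion fun i _ j _ h => hA i j h]
  exact Finset.sum_le_sum_of_subset_of_nonneg (Finset.subset_univ _) fun ω _ _ => hν ω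

end ChangeOfMeasure

section Gaussian

open MeasureTheory

theorem normalPDF_eq (s : ℝ) :
    normalPDF s = Real.exp (-(1 / 2) * s ^ 2) / Real.sqrt (2 * Real.pi) := by
  rw [normalPDF]; ring_nf

theorem integrable_normalPDF : Integrable normalPDF := by
  simp_rw [funext normalPDF_eq]
  exact (integrable_exp_neg_mul_sq (by norm_num)).div_const _

theorem integral_normalPDF : ∫ s, normalPDF s = 1 := by
  simp_rw [normalPDF_eq]
  rw [integral_div, integral_gaussian, div_eq_one_iff_eq (by positivity)]
  ring_nf

theorem normalCDF_zero : normalCDF 0 = 1 / 2 := by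
  have hsymm : normalCDF 0 = ∫ s in Set.Ioi 0, normalPDF s := by
    rw [normalCDF, ← neg_zero, ← integral_comp_neg_Iic]
    simp [normalPDF]
  have hsplit := setIntegral_union (Set.Iic_disjoint_Ioi (le_refl (0 : ℝ))) measurableSet_Ioi
    integrable_normalPDF.integrableOn integrable_normalPDF.integrableOn
  rw [Set.Iic_union_Ioi, setIntegral_univ, integral_normalPDF, ← normalCDF, ← hsymm] at hsplit
  linarith

theorem normalCDF_mono : Monotone normalCDF := fun s t hst =>
  setIntegral_mono_set integrable_normalPDF.integrableOn
    (Filter.Eventually.of_forall fun _ => by rw [normalPDF]; positivity)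
    (Set.Iic_subset_Iic.mpr hst).eventuallyLE

theorem pos_of_half_lt_normalCDF {t : ℝ} (ht : 1 / 2 < normalCDF t) : 0 < t := by
  by_contra! h
  linarith [normalCDF_mono h, normalCDF_zero]

end Gaussian

section Capacity

variable {X Y : Type*} [Fintype X] [Fintype Y] {W : X → Y → ℝ}

theorem mutualInfo_le_sum_sum (hW : ∀ x y, 0 ≤ W x y) {P : X → ℝ} (hP : ∀ x, 0 ≤ P x) :
    mutualInfo P W ≤ ∑ x, ∑ y, W x y := by
  refine Finset.sum_le_sum fun x _ => Finset.sum_le_sum fun y _ => ?_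
  set q := ∑ z, P z * W z y
  have hpq : P x * W x y ≤ q :=
    Finset.single_le_sum (fun z _ => mul_nonneg (hP z) (hW z y)) (Finset.mem_univ x)
  rcases (mul_nonneg (hP x) (hW x y)).eq_or_lt with hp | hp
  · rw [← hp, zero_mul]; exact hW x y
  have hq : 0 < q := hp.trans_le hpq
  calc P x * W x y * Real.log (W x y / q) ≤ P x * W x y * (W x y / q) :=
        mul_le_mul_of_nonneg_left (Real.log_le_self (div_nonneg (hW x y) hq.le)) hp.le
    _ = P x * W x y / q * W x y := by ring
    _ ≤ 1 * W x y := mul_le_mul_of_nonneg_right ((div_le_one hq).mpr hpq) (hW x y)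
    _ = W x y := one_mul _

theorem mutualInfo_le_capacity (hW : ∀ x y, 0 ≤ W x y) {P : X → ℝ} (hP : ∀ x, 0 ≤ P x)
    (hP1 : ∑ x, P x = 1) : mutualInfo P W ≤ capacity W :=
  le_csSup ⟨∑ x, ∑ y, W x y, fun _ ⟨_, hP', _, hc⟩ => hc ▸ mutualInfo_le_sum_sum hW hP'⟩
    ⟨P, hP, hP1, rfl⟩

end Capacity

section InformationDensity

variable {X Y : Type*} [Fintype X] (Q : X → ℝ) (W : X → Y → ℝ)

noncomputable def outDist (y : Y) : ℝ := ∑ z, Q z * W z y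

noncomputable def infoDens (x : X) (y : Y) : ℝ := Real.log (W x y / outDist Q W y)

variable {Q W} in
theorem outDist_nonneg (hQ : ∀ x, 0 ≤ Q x) (hW : ∀ x y, 0 ≤ W x y) (y : Y) :
    0 ≤ outDist Q W y :=
  Finset.sum_nonneg fun z _ => mul_nonneg (hQ z) (hW z y)

variable [Fintype Y]

noncomputable def infoDensMean (x : X) : ℝ := ∑ y, W x y * infoDens Q W x y

noncomputable def infoDensVar (x : X) : ℝ :=
  ∑ y, W x y * (infoDens Q W x y - infoDensMean Q W x) ^ 2

theorem mutualInfo_eq_sum_mul_infoDensMean :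
    mutualInfo Q W = ∑ x, Q x * infoDensMean Q W x := by
  simp_rw [mutualInfo, infoDensMean, infoDens, outDist, Finset.mul_sum, mul_assoc]

theorem condInfoVar_eq_sum_mul_infoDensVar :
    condInfoVar Q W = ∑ x, Q x * infoDensVar Q W x := by
  simp_rw [condInfoVar, infoDensVar, infoDensMean, infoDens, outDist, Finset.mul_sum, mul_assoc]

variable {Q W}

theorem sum_mul_infoDens_sub_infoDensMean (hW1 : ∀ x, ∑ y, W x y = 1) (x : X) :
    ∑ y, W x y * (infoDens Q W x y - infoDensMean Q W x) = 0 := by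
  simp_rw [mul_sub, Finset.sum_sub_distrib, ← Finset.sum_mul, hW1, one_mul, infoDensMean, sub_self]

theorem sum_outDist (hQ1 : ∑ x, Q x = 1) (hW1 : ∀ x, ∑ y, W x y = 1) :
    ∑ y, outDist Q W y = 1 := by
  simp_rw [outDist]
  rw [Finset.sum_comm]
  simp_rw [← Finset.mul_sum, hW1, mul_one, hQ1]

theorem condInfoVar_nonneg (hQ : ∀ x, 0 ≤ Q x) (hW : ∀ x y, 0 ≤ W x y) : 0 ≤ condInfoVar Q W :=
  Finset.sum_nonneg fun x _ => Finset.sum_nonneg fun y _ =>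
    mul_nonneg (mul_nonneg (hQ x) (hW x y)) (sq_nonneg _)

end InformationDensity

section Composition

variable {X : Type*} [DecidableEq X] {n : ℕ}

def HasType (x : Fin n → X) (Q : X → ℝ) : Prop :=
  ∀ a, ((Finset.univ.filter fun i => x i = a).card : ℝ) = n * Q a

variable {x : Fin n → X} {Q : X → ℝ}

theorem HasType.pos (hx : HasType x Q) (i : Fin n) : 0 < Q (x i) := by
  have hcard : (1 : ℝ) ≤ (Finset.univ.filter fun j => x j = x i).card := by
    exact_mod_cast Finset.card_pos.mpr ⟨i, by simp⟩
  rw [hx] at hcard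
  by_contra! hQ
  nlinarith [(Nat.cast_nonneg n : (0 : ℝ) ≤ n)]

theorem HasType.nonneg (hx : HasType x Q) (hn : 0 < n) (a : X) : 0 ≤ Q a :=
  nonneg_of_mul_nonneg_right ((hx a).symm ▸ Nat.cast_nonneg _) (by exact_mod_cast hn)

variable [Fintype X]

theorem HasType.sum_comp (hx : HasType x Q) (F : X → ℝ) :
    ∑ i, F (x i) = n * ∑ a, Q a * F a := by
  rw [← Finset.sum_fiberwise Finset.univ x, Finset.mul_sum]
  refine Finset.sum_congr rfl fun a _ => ?_
  rw [Finset.sum_congr rfl fun i hi => congrArg F (Finset.mem_filter.mp hi).2, Finset.sum_const,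
    nsmul_eq_mul, hx a, mul_assoc]

theorem HasType.sum_eq_one (hx : HasType x Q) (hn : 0 < n) : ∑ a, Q a = 1 := by
  have h := hx.sum_comp fun _ => 1
  simp only [Finset.sum_const, Finset.card_univ, Fintype.card_fin, nsmul_eq_mul, mul_one] at h
  exact (mul_eq_left₀ (by exact_mod_cast hn.ne')).mp h.symm

end Composition

section Converse

variable {X Y : Type*} [Fintype X] [DecidableEq X] {W : X → Y → ℝ} {Q : X → ℝ}
  {n : ℕ} {x : Fin n → X}

theorem HasType.prod_le_exp_mul_prod_outDist (hQ : ∀ a, 0 ≤ Q a) (hW : ∀ x y, 0 ≤ W x y)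
    (hx : HasType x Q) {γ : ℝ} (y : Fin n → Y) (hy : ∑ i, infoDens Q W (x i) (y i) ≤ γ) :
    ∏ i, W (x i) (y i) ≤ Real.exp γ * ∏ i, outDist Q W (y i) := by
  by_cases hzero : ∃ i, W (x i) (y i) = 0
  · obtain ⟨i, hi⟩ := hzero
    rw [Finset.prod_eq_zero (Finset.mem_univ i) hi]
    exact mul_nonneg (Real.exp_nonneg γ) (Finset.prod_nonneg fun j _ => outDist_nonneg hQ hW (y j))
  have hpos : ∀ i, 0 < W (x i) (y i) := fun i => (hW _ _).lt_of_ne' fun h => hzero ⟨i, h⟩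
  -- `Q (x i) > 0` keeps the output law positive, so the logarithms in `infoDens` are genuine.
  have hout : ∀ i, 0 < outDist Q W (y i) := fun i =>
    (mul_pos (hx.pos i) (hpos i)).trans_le <| Finset.single_le_sum
      (fun z _ => mul_nonneg (hQ z) (hW z (y i))) (Finset.mem_univ (x i))
  rw [← div_le_iff₀ (Finset.prod_pos fun i _ => hout i), ← Finset.prod_div_distrib]
  calc ∏ i, W (x i) (y i) / outDist Q W (y i) = Real.exp (∑ i, infoDens Q W (x i) (y i)) := by
        rw [Real.exp_sum]
        exact Finset.prod_congr rfl fun i _ => (Real.exp_log (div_pos (hpos i) (hout i))).symm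
    _ ≤ Real.exp γ := Real.exp_le_exp.mpr hy

variable [Fintype Y]

theorem HasType.sum_prod_mul_sum_infoDens_sub_sq (hW1 : ∀ x, ∑ y, W x y = 1)
    (hx : HasType x Q) :
    ∑ y : Fin n → Y, (∏ i, W (x i) (y i)) * (∑ i, infoDens Q W (x i) (y i) - n * mutualInfo Q W) ^ 2
      = n * condInfoVar Q W := by
  have hcenter : ∀ y : Fin n → Y, ∑ i, infoDens Q W (x i) (y i) - n * mutualInfo Q W
      = ∑ i, (infoDens Q W (x i) (y i) - infoDensMean Q W (x i)) := fun y => by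
    rw [Finset.sum_sub_distrib, mutualInfo_eq_sum_mul_infoDensMean, ← hx.sum_comp]
  simp_rw [hcenter]
  rw [sum_prod_mul_sum_sq (fun i => hW1 (x i)) _
      fun i => sum_mul_infoDens_sub_infoDensMean hW1 (x i), condInfoVar_eq_sum_mul_infoDensVar]
  exact hx.sum_comp (infoDensVar Q W)

theorem HasType.sum_prod_le (hQ : ∀ a, 0 ≤ Q a) (hW : ∀ x y, 0 ≤ W x y)
    (hW1 : ∀ x, ∑ y, W x y = 1) (hx : HasType x Q) {γ : ℝ} (hγ : n * mutualInfo Q W < γ)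
    (S : Finset (Fin n → Y)) :
    ∑ y ∈ S, ∏ i, W (x i) (y i) ≤ n * condInfoVar Q W / (γ - n * mutualInfo Q W) ^ 2
      + Real.exp γ * ∑ y ∈ S, ∏ i, outDist Q W (y i) := by
  have h := sum_le_div_sq_add_exp_mul (fun y => Finset.prod_nonneg fun i _ => hW (x i) (y i))
    (fun y => Finset.prod_nonneg fun i _ => outDist_nonneg hQ hW (y i))
    (fun y => ∑ i, infoDens Q W (x i) (y i)) hγ (hx.prod_le_exp_mul_prod_outDist hQ hW) S
  rwa [hx.sum_prod_mul_sum_infoDens_sub_sq hW1] at h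

theorem one_sub_le_avgErr [DecidableEq Y] (hQ : ∀ a, 0 ≤ Q a) (hQ1 : ∑ a, Q a = 1)
    (hW : ∀ x y, 0 ≤ W x y) (hW1 : ∀ x, ∑ y, W x y = 1) {M : ℕ} (hM : 0 < M)
    {cw : Fin M → Fin n → X} {A : Fin M → Finset (Fin n → Y)} (hdec : isDecoder n M A)
    (hcomp : hasComposition n M cw Q) {γ : ℝ} (hγ : n * mutualInfo Q W < γ) :
    1 - n * condInfoVar Q W / (γ - n * mutualInfo Q W) ^ 2 - Real.exp γ / M
      ≤ avgErr W n M cw A := by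
  set B := n * condInfoVar Q W / (γ - n * mutualInfo Q W) ^ 2
  have hM' : (0 : ℝ) < M := by exact_mod_cast hM
  have hout : ∑ m, ∑ y ∈ A m, ∏ i, outDist Q W (y i) ≤ 1 :=
    (sum_sum_le_sum_of_pairwise_disjoint hdec.1 fun y =>
      Finset.prod_nonneg fun i _ => outDist_nonneg hQ hW (y i)).trans_eq
    (sum_prod_eq_one fun _ => sum_outDist hQ1 hW1)
  have hcorrect : ∑ m, ∑ y ∈ A m, ∏ i, W (cw m i) (y i) ≤ M * B + Real.exp γ := calc
    _ ≤ ∑ m, (B + Real.exp γ * ∑ y ∈ A m, ∏ i, outDist Q W (y i)) :=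
        Finset.sum_le_sum fun m _ => HasType.sum_prod_le hQ hW hW1 (hcomp m) hγ (A m)
    _ = M * B + Real.exp γ * ∑ m, ∑ y ∈ A m, ∏ i, outDist Q W (y i) := by
        simp [Finset.sum_add_distrib, Finset.mul_sum]
    _ ≤ M * B + Real.exp γ := by nlinarith [Real.exp_pos γ]
  have herr : avgErr W n M cw A = 1 - (∑ m, ∑ y ∈ A m, ∏ i, W (cw m i) (y i)) / M := by
    have hcompl : ∀ m, ∑ y ∈ (A m)ᶜ, ∏ i, W (cw m i) (y i)
        = 1 - ∑ y ∈ A m, ∏ i, W (cw m i) (y i) := fun m => by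
      rw [eq_sub_iff_add_eq', Finset.sum_add_sum_compl, sum_prod_eq_one fun i => hW1 (cw m i)]
    rw [avgErr, Finset.sum_congr rfl fun m _ => hcompl m, Finset.sum_sub_distrib]
    field_simp
    simp
  rw [herr, sub_sub, sub_le_sub_iff_left, div_le_iff₀ hM', add_mul, div_mul_cancel₀ _ hM'.ne']
  linarith

theorem one_sub_le_avgErr_of_capacity [DecidableEq Y] (hQ : ∀ a, 0 ≤ Q a) (hQ1 : ∑ a, Q a = 1)
    (hW : ∀ x y, 0 ≤ W x y) (hW1 : ∀ x, ∑ y, W x y = 1) {M : ℕ} (hM : 0 < M)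
    {cw : Fin M → Fin n → X} {A : Fin M → Finset (Fin n → Y)} (hdec : isDecoder n M A)
    (hcomp : hasComposition n M cw Q) {s : ℝ} (hs : 0 < s) :
    1 - n * condInfoVar Q W / s ^ 2 - Real.exp (n * capacity W + s) / M
      ≤ avgErr W n M cw A := by
  have hI : n * mutualInfo Q W ≤ n * capacity W :=
    mul_le_mul_of_nonneg_left (mutualInfo_le_capacity hW hQ hQ1) n.cast_nonneg
  have hgap : s ≤ n * capacity W + s - n * mutualInfo Q W := by linarith
  have hchebyshev := div_le_div_of_nonneg_left (mul_nonneg n.cast_nonneg (condInfoVar_nonneg hQ hW))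
    (pow_pos hs 2) (pow_le_pow_left₀ hs.le hgap 2)
  linarith [one_sub_le_avgErr hQ hQ1 hW hW1 hM hdec hcomp (γ := n * capacity W + s)
    (by linarith)]

end Converse

theorem mul_sqrt_div_eq_sqrt_mul {n : ℝ} (hn : 0 < n) (v : ℝ) :
    n * Real.sqrt (v / n) = Real.sqrt (n * v) := by
  rw [show n * v = n ^ 2 * (v / n) by field_simp, Real.sqrt_mul (sq_nonneg n), Real.sqrt_sq hn.le]

theorem stmt13_general {X Y : Type*} [Fintype X] [Fintype Y] [DecidableEq X] [DecidableEq Y]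
    (W : X → Y → ℝ) (hW0 : ∀ x y, 0 ≤ W x y) (hW1 : ∀ x, ∑ y, W x y = 1)
    (ε : ℝ) (hε : ε ∈ Set.Ioo (1 / 2 : ℝ) 1)
    (hV : 0 < epsDispersion ε W)
    (a : ℝ) (ha : 2 / (1 - ε) < a)
    (Φinv : ℝ) (hΦ : normalCDF Φinv = ε)
    (n : ℕ) (hn : 0 < n)
    (Rn : ℝ)
    (hRn : Rn = capacity W + Real.sqrt (epsDispersion ε W / n) * Φinv
      - Real.log (1 - ε - 2 / a) / n)
    (M : ℕ) (hM : 0 < M)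
    (cw : Fin M → Fin n → X) (A : Fin M → Finset (Fin n → Y))
    (hdec : isDecoder n M A)
    (Q : X → ℝ) (hcomp : hasComposition n M cw Q)
    (hQV : condInfoVar Q W < epsDispersion ε W * Φinv ^ 2 / a)
    (hMrate : Real.exp (n * Rn) ≤ (M : ℝ)) :
    ε + 1 / a ≤ avgErr W n M cw A ∧ ε < avgErr W n M cw A := by
  obtain ⟨hε1, hε2⟩ := hε
  set V := epsDispersion ε W
  have hn' : (0 : ℝ) < n := by exact_mod_cast hn
  have hapos : 0 < a := (div_pos two_pos (sub_pos.mpr hε2)).trans ha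
  have hθ : 0 < 1 - ε - 2 / a := by
    rw [div_lt_iff₀ (sub_pos.mpr hε2)] at ha
    rw [sub_pos, div_lt_iff₀ hapos]
    linarith
  have hQ : HasType (cw ⟨0, hM⟩) Q := hcomp ⟨0, hM⟩
  set s := Real.sqrt (n * V) * Φinv with hs_def
  have hΦpos : 0 < Φinv := pos_of_half_lt_normalCDF (hΦ ▸ hε1)
  have hs : 0 < s := mul_pos (Real.sqrt_pos.mpr (mul_pos hn' hV)) hΦpos
  have hlow := one_sub_le_avgErr_of_capacity (hQ.nonneg hn) (hQ.sum_eq_one hn) hW0 hW1 hM hdec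
    hcomp hs
  have hchebyshev : n * condInfoVar Q W / s ^ 2 ≤ 1 / a := by
    rw [mul_pow, Real.sq_sqrt (by positivity), mul_assoc, mul_div_mul_left _ _ hn'.ne',
      div_le_div_iff₀ (mul_pos hV (pow_pos hΦpos 2)) hapos]
    rw [lt_div_iff₀ hapos] at hQV
    linarith
  have hrate : Real.exp (n * capacity W + s) / M ≤ 1 - ε - 2 / a := by
    refine (div_le_div_of_nonneg_left (Real.exp_nonneg _) (Real.exp_pos _) hMrate).trans_eq ?_
    rw [← Real.exp_sub, ← Real.exp_log hθ, hRn, hs_def, ← mul_sqrt_div_eq_sqrt_mul hn']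
    field_simp
    ring_nf
  constructor <;> linarith [one_div_pos.mpr hapos, show 2 / a = 2 * (1 / a) by ring]

theorem stmt13 {X Y : Type*} [Fintype X] [Fintype Y] [DecidableEq X] [DecidableEq Y]
    [Nonempty X] [Nonempty Y]
    (W : X → Y → ℝ) (hW0 : ∀ x y, 0 ≤ W x y) (hW1 : ∀ x, ∑ y, W x y = 1)
    (ε : ℝ) (hε : ε ∈ Set.Ioo (1 / 2 : ℝ) 1)
    (hV : 0 < epsDispersion ε W)
    (a : ℝ) (ha : 2 / (1 - ε) < a)
    (Φinv : ℝ) (hΦ : normalCDF Φinv = ε)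
    (n : ℕ) (hn : 0 < n)
    (Rn : ℝ)
    (hRn : Rn = capacity W + Real.sqrt (epsDispersion ε W / n) * Φinv
      - Real.log (1 - ε - 2 / a) / n)
    (M : ℕ) (hM : 0 < M)
    (cw : Fin M → Fin n → X) (A : Fin M → Finset (Fin n → Y))
    (hdec : isDecoder n M A)
    (Q : X → ℝ) (hcomp : hasComposition n M cw Q)
    (hQV : condInfoVar Q W < epsDispersion ε W * Φinv ^ 2 / a)
    (hMrate : Real.exp (n * Rn) ≤ (M : ℝ)) :
    ε + 1 / a ≤ avgErr W n M cw A ∧ ε < avgErr W n M cw A :=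
  stmt13_general W hW0 hW1 ε hε hV a ha Φinv hΦ n hn Rn hRn M hM cw A hdec Q hcomp hQV hMrate
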